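/- Let k be a field and let Ω be an open subscheme of the affine line A^1_k with Ω ≠ A^1_k. Then for every reduced, separated, finite-type k-scheme U, every k-morphism U × A^1 → Ω factors through the projection U × A^1 → U; equivalently, composition with the projection induces a bijection Hom_k(U, Ω) → Hom_k(U × A^1, Ω). (In particular, the schemes A^1 ∖ {0}, A^1 ∖ {1} and A^1 ∖ {0,1} are A^1-rigid.) -/

import Mathlib

open CategoryTheory AlgebraicGeometry CategoryTheory.Limits Polynomial
open TensorProduct

universe u

namespace Paper

variable (k : Type u) [Field k]

/-- `Spec k`. -/
noncomputable def SpecK : Scheme.{u} := Spec (CommRingCat.of k)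

/-- The affine line `𝔸¹ = Spec k[t]` over `k`. -/
noncomputable def A1 : Scheme.{u} := Spec (CommRingCat.of (Polynomial k))

/-- The structure morphism of the affine line over `k`. -/
noncomputable def a1toSpec : A1 k ⟶ SpecK k :=
  Spec.map (CommRingCat.ofHom (algebraMap k (Polynomial k)))

lemma poly_const_of_unit {k : Type u} [Field k] {R : Type*} [CommRing R] [IsReduced R]
    (q : k →+* R) (p : Polynomial k) (hp : 1 ≤ p.natDegree) (F : Polynomial R)
    (hu : IsUnit (Polynomial.eval₂ ((Polynomial.C : R →+* R[X]).comp q) F p)) :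
    ∃ r : R, F = Polynomial.C r := by
  refine ⟨F.coeff 0, Polynomial.ext fun n => ?_⟩
  cases n with
  | zero => simp
  | succ m =>
    rw [Polynomial.coeff_C, if_neg (Nat.succ_ne_zero m)]
    have hnil : IsNilpotent (F.coeff (m+1)) := by
      rw [nilpotent_iff_mem_prime]
      intro J hJ
      haveI := hJ
      set φ : R →+* R ⧸ J := Ideal.Quotient.mk J with hφ
      have hu' : IsUnit ((Polynomial.mapRingHom φ) (Polynomial.eval₂ ((Polynomial.C : R →+* R[X]).comp q) F p)) :=
        hu.map _
      rw [Polynomial.hom_eval₂] at hu'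
      have hcomp : (Polynomial.mapRingHom φ).comp ((Polynomial.C : R →+* R[X]).comp q)
          = (Polynomial.C : (R⧸J) →+* (R⧸J)[X]).comp (φ.comp q) := by
        ext a
        simp
      rw [hcomp] at hu'
      have hinj : Function.Injective (φ.comp q) := (φ.comp q).injective
      -- rewrite eval₂ as comp
      have heq : Polynomial.eval₂ ((Polynomial.C : (R⧸J) →+* (R⧸J)[X]).comp (φ.comp q))
          ((Polynomial.mapRingHom φ) F) p
          = (p.map (φ.comp q)).comp (F.map φ) := by
        rw [Polynomial.comp, Polynomial.eval₂_map]; rfl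
      rw [heq] at hu'
      have hdeg := Polynomial.natDegree_eq_zero_of_isUnit hu'
      rw [Polynomial.natDegree_comp, Polynomial.natDegree_map_eq_of_injective hinj] at hdeg
      rcases Nat.mul_eq_zero.mp hdeg with h | h
      · omega
      · have : (F.map φ).coeff (m+1) = 0 :=
          Polynomial.coeff_eq_zero_of_natDegree_lt (by omega)
        rw [Polynomial.coeff_map] at this
        exact Ideal.Quotient.eq_zero_iff_mem.mp this
    exact hnil.eq_zero

variable (k : Type u) [Field k]
lemma local_factor (R : CommRingCat.{u}) [IsReduced ↑R] (sV : Spec R ⟶ SpecK k)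
    (p : Polynomial k) (hp : 1 ≤ p.natDegree)
    (f : pullback sV (a1toSpec k) ⟶ A1 k)
    (hcomp : f ≫ a1toSpec k = pullback.fst sV (a1toSpec k) ≫ sV)
    (hrange : ∀ y : ↑(pullback sV (a1toSpec k)),
      p ∉ ((f.base y : PrimeSpectrum (Polynomial k))).asIdeal) :
    ∃ g : Spec R ⟶ A1 k, f = pullback.fst sV (a1toSpec k) ≫ g := by
  obtain ⟨q, rfl⟩ : ∃ q : CommRingCat.of k ⟶ R, Spec.map q = sV :=
    ⟨Spec.preimage sV, Spec.map_preimage sV⟩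
  letI : Algebra k ↑R := RingHom.toAlgebra q.hom
  let iso : pullback (Spec.map q) (a1toSpec k) ≅ Spec (CommRingCat.of (↑R ⊗[k] Polynomial k)) :=
    pullbackSpecIso k ↑R (Polynomial k)
  set f'' : Spec (CommRingCat.of (↑R ⊗[k] Polynomial k)) ⟶ A1 k := iso.inv ≫ f with hf''
  obtain ⟨θ, hθ⟩ : ∃ θ : CommRingCat.of (Polynomial k) ⟶ CommRingCat.of (↑R ⊗[k] Polynomial k),
      Spec.map θ = f'' := ⟨Spec.preimage f'', Spec.map_preimage f''⟩
  -- constants: θ ∘ algebraMap = includeLeft ∘ q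
  have hconst : CommRingCat.ofHom (algebraMap k (Polynomial k)) ≫ θ
      = q ≫ CommRingCat.ofHom (Algebra.TensorProduct.includeLeftRingHom (R := k) (A := ↑R) (B := Polynomial k)) := by
    apply Spec.map_injective
    rw [Spec.map_comp, Spec.map_comp, hθ]
    show f'' ≫ a1toSpec k = _
    rw [hf'']; erw [Category.assoc, hcomp, ← Category.assoc]
    exact congrArg (fun t => t ≫ Spec.map q)
      (show iso.inv ≫ pullback.fst (Spec.map q) (a1toSpec k)
          = Spec.map (CommRingCat.ofHom Algebra.TensorProduct.includeLeftRingHom)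
        from pullbackSpecIso_inv_fst k ↑R (Polynomial k))
  have hconst' : ∀ a : k, θ (Polynomial.C a) = (q a) ⊗ₜ[k] (1 : Polynomial k) := by
    intro a
    have := congrArg (fun (ψ : CommRingCat.of k ⟶ CommRingCat.of (↑R ⊗[k] Polynomial k)) => ψ a) hconst
    simpa using this
  -- unit
  have hunit : IsUnit (θ p) := by
    by_contra hnu
    obtain ⟨M, hM, hle⟩ := Ideal.exists_le_maximal (Ideal.span {θ p})
      (by rwa [Ne, Ideal.span_singleton_eq_top])
    haveI := hM.isPrime
    let y : PrimeSpectrum (↑R ⊗[k] Polynomial k) := ⟨M, hM.isPrime⟩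
    have h1 : (f''.base y : PrimeSpectrum (Polynomial k)) = PrimeSpectrum.comap θ.hom y := by
      rw [← hθ]; rfl
    have h2 := hrange (iso.inv.base y)
    rw [show f.base (iso.inv.base y) = f''.base y from (Scheme.Hom.comp_apply iso.inv f y).symm] at h2
    rw [h1] at h2
    exact h2 (hle (Ideal.subset_span rfl))
  -- transfer to polynomials over R
  let e : (↑R)[X] ≃ₐ[k] ↑R ⊗[k] Polynomial k := polyEquivTensor k ↑R
  have heC : ∀ r : ↑R, e (Polynomial.C r) = r ⊗ₜ[k] (1 : Polynomial k) := by
    intro r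
    show polyEquivTensor k ↑R (Polynomial.C r) = _
    rw [polyEquivTensor_apply, Polynomial.eval₂_C]
    rfl
  have heC' : ∀ r : ↑R, e.symm (r ⊗ₜ[k] (1 : Polynomial k)) = Polynomial.C r := by
    intro r
    apply e.injective
    rw [AlgEquiv.apply_symm_apply, heC]
  set F : (↑R)[X] := e.symm (θ Polynomial.X) with hF
  -- the two ring homs k[X] → R[X] agree
  have hkey : (e.symm : ↑R ⊗[k] Polynomial k →+* (↑R)[X]).comp θ.hom
      = Polynomial.eval₂RingHom ((Polynomial.C : ↑R →+* (↑R)[X]).comp q.hom) F := by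
    apply Polynomial.ringHom_ext
    · intro a
      rw [RingHom.comp_apply, hconst' a]
      show _ = Polynomial.eval₂ ((Polynomial.C : ↑R →+* (↑R)[X]).comp q.hom) F (Polynomial.C a)
      rw [Polynomial.eval₂_C, RingHom.comp_apply]
      exact heC' (q a)
    · show _ = Polynomial.eval₂ ((Polynomial.C : ↑R →+* (↑R)[X]).comp q.hom) F Polynomial.X
      rw [Polynomial.eval₂_X]
      rfl
  -- unit of eval₂
  have hunit' : IsUnit (Polynomial.eval₂ ((Polynomial.C : ↑R →+* (↑R)[X]).comp q.hom) F p) := by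
    have := hunit.map (e.symm : ↑R ⊗[k] Polynomial k →+* (↑R)[X])
    rwa [show (e.symm : ↑R ⊗[k] Polynomial k →+* (↑R)[X]) (θ p)
        = Polynomial.eval₂ ((Polynomial.C : ↑R →+* (↑R)[X]).comp q.hom) F p from by
      rw [← Polynomial.coe_eval₂RingHom, ← hkey]; rfl] at this
  obtain ⟨r, hr⟩ := @poly_const_of_unit k _ ↑R _ _ q.hom p hp F hunit'
  -- now build g
  refine ⟨Spec.map (CommRingCat.ofHom (Polynomial.eval₂RingHom q.hom r)), ?_⟩
  have hθ2 : θ = CommRingCat.ofHom (Polynomial.eval₂RingHom q.hom r) ≫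
      CommRingCat.ofHom (Algebra.TensorProduct.includeLeftRingHom (R := k) (A := ↑R) (B := Polynomial k)) := by
    have : θ.hom
        = (Algebra.TensorProduct.includeLeftRingHom (R := k) (A := ↑R) (B := Polynomial k)).comp
            (Polynomial.eval₂RingHom q.hom r) := by
      apply Polynomial.ringHom_ext
      · intro a
        show θ.hom (Polynomial.C a)
            = Algebra.TensorProduct.includeLeftRingHom (R := k) (A := ↑R) (B := Polynomial k)
                (Polynomial.eval₂ q.hom r (Polynomial.C a))
        rw [Polynomial.eval₂_C]
        exact (hconst' a).trans rfl
      · show θ.hom Polynomial.X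
            = Algebra.TensorProduct.includeLeftRingHom (R := k) (A := ↑R) (B := Polynomial k)
                (Polynomial.eval₂ q.hom r Polynomial.X)
        rw [Polynomial.eval₂_X]
        have hX : θ Polynomial.X = e F := by rw [hF, AlgEquiv.apply_symm_apply]
        rw [hr, heC] at hX
        exact hX.trans rfl
    exact CommRingCat.hom_ext this
  have e1 : f = iso.hom ≫ f'' := (Iso.hom_inv_id_assoc iso f).symm
  have e2 : f'' = Spec.map (CommRingCat.ofHom (Algebra.TensorProduct.includeLeftRingHom (R := k) (A := ↑R) (B := Polynomial k)))
        ≫ Spec.map (CommRingCat.ofHom (Polynomial.eval₂RingHom q.hom r)) := by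
    rw [← hθ, hθ2, Spec.map_comp]
  have e3 : iso.hom ≫ Spec.map (CommRingCat.ofHom (Algebra.TensorProduct.includeLeftRingHom (R := k) (A := ↑R) (B := Polynomial k)))
      = pullback.fst (Spec.map q) (a1toSpec k) := pullbackSpecIso_hom_fst k ↑R (Polynomial k)
  exact e1.trans ((congrArg (fun t => iso.hom ≫ t) e2).trans
    ((Category.assoc _ _ _).symm.trans
      (congrArg (fun t => t ≫ Spec.map (CommRingCat.ofHom (Polynomial.eval₂RingHom q.hom r))) e3)))

noncomputable def zsec : SpecK k ⟶ A1 k :=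
  Spec.map (CommRingCat.ofHom (Polynomial.evalRingHom (0 : k)))

lemma zsec_a1toSpec : zsec k ≫ a1toSpec k = 𝟙 (SpecK k) := by
  show Spec.map _ ≫ Spec.map _ = 𝟙 (Spec (CommRingCat.of k))
  rw [← Spec.map_comp]
  have : CommRingCat.ofHom (algebraMap k (Polynomial k)) ≫
      CommRingCat.ofHom (Polynomial.evalRingHom (0 : k)) = 𝟙 (CommRingCat.of k) := by
    ext a
    simp
  rw [this, Spec.map_id]

lemma exists_poly (Ω : Scheme.{u}) (ι : Ω ⟶ A1 k) (hι : IsOpenImmersion ι)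
    (hne : ¬ Function.Surjective ι.base) :
    ∃ p : Polynomial k, 1 ≤ p.natDegree ∧
      ∀ y : Ω, p ∉ ((ι.base y : PrimeSpectrum (Polynomial k))).asIdeal := by
  rw [Function.Surjective] at hne
  push_neg at hne
  obtain ⟨x₀, hx₀⟩ := hne
  let x : PrimeSpectrum (Polynomial k) := x₀
  have hx : ∀ y : Ω, (ι.base y : PrimeSpectrum (Polynomial k)) ≠ x := fun y => hx₀ y
  by_cases hbot : x.asIdeal = ⊥
  · refine ⟨Polynomial.X, by simp, fun y => ?_⟩
    intro _
    have hopen : IsOpen (Set.range ι.base) := hι.base_open.isOpen_range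
    have hspec : x ⤳ (ι.base y : PrimeSpectrum (Polynomial k)) := by
      exact (PrimeSpectrum.le_iff_specializes x (ι.base y)).mp
        (by show x.asIdeal ≤ _; rw [hbot]; exact bot_le)
    obtain ⟨y₀, hy₀⟩ : x₀ ∈ Set.range ι.base := hspec.mem_open hopen ⟨y, rfl⟩
    exact hx₀ y₀ hy₀
  · have hprin : x.asIdeal.IsPrincipal := inferInstance
    set p := Submodule.IsPrincipal.generator x.asIdeal with hpdef
    have hspan : Ideal.span {p} = x.asIdeal := Ideal.span_singleton_generator _
    haveI hxprime : x.asIdeal.IsPrime := x.isPrime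
    have hpprime : Prime p :=
      Submodule.IsPrincipal.prime_generator_of_isPrime _ hbot
    have hmax : (Ideal.span {p}).IsMaximal :=
      PrincipalIdealRing.isMaximal_of_irreducible hpprime.irreducible
    have hdeg : 1 ≤ p.natDegree := by
      by_contra h
      push_neg at h
      interval_cases hn : p.natDegree
      · have := Polynomial.eq_C_of_natDegree_eq_zero hn
        by_cases hc : p.coeff 0 = 0
        · rw [hc, map_zero] at this
          exact hpprime.ne_zero this
        · exact hpprime.not_unit (this ▸ (Polynomial.isUnit_C.mpr (isUnit_iff_ne_zero.mpr hc)))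
    refine ⟨p, hdeg, fun y hy => ?_⟩
    have hle : Ideal.span {p} ≤ ((ι.base y : PrimeSpectrum (Polynomial k))).asIdeal := by
      rw [Ideal.span_le, Set.singleton_subset_iff]
      exact hy
    have heq := hmax.eq_of_le
      (Ideal.IsPrime.ne_top (ι.base y : PrimeSpectrum (Polynomial k)).isPrime) hle
    apply hx y
    apply PrimeSpectrum.ext
    rw [← hspan, heq]


/-- Any proper open subscheme `Ω ⊊ 𝔸¹` of the affine line is `𝔸¹`-rigid: for any reduced,
separated, finite type `k`-scheme `U`, composition with the projection `U × 𝔸¹ ⟶ U` induces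
a bijection `Hom_k(U, Ω) ⟶ Hom_k(U × 𝔸¹, Ω)`; in particular every `k`-morphism
`U × 𝔸¹ ⟶ Ω` factors through the projection. -/
theorem statement_11 (Ω : Scheme.{u}) (ι : Ω ⟶ A1 k) (hι : IsOpenImmersion ι)
    (hne : ¬ Function.Surjective ι.base)
    (U : Scheme.{u}) (sU : U ⟶ SpecK k) (hred : IsReduced U)
    (hsep : IsSeparated sU) (hft : LocallyOfFiniteType sU) (hqc : QuasiCompact sU) :
    Function.Bijective
      (fun ψ : {ψ : U ⟶ Ω // ψ ≫ ι ≫ a1toSpec k = sU} =>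
        (⟨pullback.fst sU (a1toSpec k) ≫ ψ.1, by rw [Category.assoc, ψ.2]⟩ :
          {φ : pullback sU (a1toSpec k) ⟶ Ω //
            φ ≫ ι ≫ a1toSpec k = pullback.fst sU (a1toSpec k) ≫ sU})) := by
  haveI := hι
  let σ : U ⟶ pullback sU (a1toSpec k) :=
    pullback.lift (𝟙 U) (sU ≫ zsec k)
      (by rw [Category.id_comp, Category.assoc, zsec_a1toSpec, Category.comp_id])
  have hσfst : σ ≫ pullback.fst sU (a1toSpec k) = 𝟙 U := pullback.lift_fst _ _ _
  constructor
  · intro ψ₁ ψ₂ h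
    have h' : pullback.fst sU (a1toSpec k) ≫ ψ₁.1 = pullback.fst sU (a1toSpec k) ≫ ψ₂.1 :=
      congrArg Subtype.val h
    apply Subtype.ext
    calc ψ₁.1 = 𝟙 U ≫ ψ₁.1 := (Category.id_comp _).symm
      _ = σ ≫ pullback.fst sU (a1toSpec k) ≫ ψ₁.1 := by rw [← hσfst, Category.assoc]
      _ = σ ≫ pullback.fst sU (a1toSpec k) ≫ ψ₂.1 := by rw [h']
      _ = ψ₂.1 := by rw [← Category.assoc, hσfst, Category.id_comp]
  · rintro ⟨φ, hφ⟩
    obtain ⟨p, hp, hp2⟩ := exists_poly k Ω ι hι hne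
    have hf : (φ ≫ ι) ≫ a1toSpec k = pullback.fst sU (a1toSpec k) ≫ sU := by
      rw [Category.assoc]; exact hφ
    have main : pullback.fst sU (a1toSpec k) ≫ σ ≫ φ = φ := by
      haveI : Mono ι := inferInstance
      rw [← cancel_mono ι]
      simp only [Category.assoc]
      -- goal : fst ≫ σ ≫ φ ≫ ι = φ ≫ ι
      set 𝒰 := U.affineCover with h𝒰
      apply (Scheme.Pullback.openCoverOfLeft 𝒰 sU (a1toSpec k)).hom_ext
      rintro (i : 𝒰.I₀)
      set m : pullback (𝒰.f i ≫ sU) (a1toSpec k) ⟶ pullback sU (a1toSpec k) :=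
        (Scheme.Pullback.openCoverOfLeft 𝒰 sU (a1toSpec k)).f i with hm
      have hm1 : m ≫ pullback.fst sU (a1toSpec k)
          = pullback.fst (𝒰.f i ≫ sU) (a1toSpec k) ≫ 𝒰.f i := by
        exact pullback.lift_fst _ _ _
      -- local data
      haveI : _root_.IsReduced ((U.local_affine i).choose_spec.choose : CommRingCat) := by
        rw [← affine_isReduced_iff]
        have := isReduced_of_isOpenImmersion (𝒰.f i); exact this
      have hcomp_i : (m ≫ φ ≫ ι) ≫ a1toSpec k
          = pullback.fst (𝒰.f i ≫ sU) (a1toSpec k) ≫ (𝒰.f i ≫ sU) := by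
        rw [Category.assoc, Category.assoc]
        rw [show ι ≫ a1toSpec k = ι ≫ a1toSpec k from rfl]
        rw [← Category.assoc φ, hf, ← Category.assoc, hm1, Category.assoc]
      have hrange_i : ∀ y : ↑(pullback (𝒰.f i ≫ sU) (a1toSpec k)),
          p ∉ (((m ≫ φ ≫ ι).base y : PrimeSpectrum (Polynomial k))).asIdeal := by
        intro y
        have : (m ≫ φ ≫ ι).base y = ι.base ((m ≫ φ).base y) := by
          rw [← Scheme.Hom.comp_apply, Category.assoc]
        rw [this]
        exact hp2 ((m ≫ φ).base y)
      obtain ⟨g, hg⟩ : ∃ g : 𝒰.X i ⟶ A1 k, m ≫ φ ≫ ι = pullback.fst (𝒰.f i ≫ sU) (a1toSpec k) ≫ g := local_factor k ((U.local_affine i).choose_spec.choose)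
        (𝒰.f i ≫ sU) p hp (m ≫ φ ≫ ι) hcomp_i hrange_i
      -- local section
      let σi : 𝒰.X i ⟶ pullback (𝒰.f i ≫ sU) (a1toSpec k) :=
        pullback.lift (𝟙 _) ((𝒰.f i ≫ sU) ≫ zsec k)
          (by rw [Category.id_comp, Category.assoc, zsec_a1toSpec, Category.comp_id])
      have hσi_fst : σi ≫ pullback.fst (𝒰.f i ≫ sU) (a1toSpec k) = 𝟙 _ :=
        pullback.lift_fst _ _ _
      have hσi : 𝒰.f i ≫ σ = σi ≫ m := by
        apply pullback.hom_ext
        · simp only [Category.assoc]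
          rw [hσfst, Category.comp_id, hm1, ← Category.assoc, hσi_fst, Category.id_comp]
        · simp only [Category.assoc]
          have hm2 : m ≫ pullback.snd sU (a1toSpec k)
              = pullback.snd (𝒰.f i ≫ sU) (a1toSpec k) ≫ 𝟙 (A1 k) := by
            exact pullback.lift_snd _ _ _
          rw [show σ ≫ pullback.snd sU (a1toSpec k) = sU ≫ zsec k from pullback.lift_snd _ _ _,
            hm2, Category.comp_id,
            show σi ≫ pullback.snd (𝒰.f i ≫ sU) (a1toSpec k) = (𝒰.f i ≫ sU) ≫ zsec k
              from pullback.lift_snd _ _ _]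
          simp only [Category.assoc]
      calc m ≫ pullback.fst sU (a1toSpec k) ≫ σ ≫ φ ≫ ι
          = (m ≫ pullback.fst sU (a1toSpec k)) ≫ σ ≫ φ ≫ ι := by rw [Category.assoc]
        _ = (pullback.fst (𝒰.f i ≫ sU) (a1toSpec k) ≫ 𝒰.f i) ≫ σ ≫ φ ≫ ι := by rw [hm1]
        _ = pullback.fst (𝒰.f i ≫ sU) (a1toSpec k) ≫ (𝒰.f i ≫ σ) ≫ φ ≫ ι := by
            simp only [Category.assoc]
        _ = pullback.fst (𝒰.f i ≫ sU) (a1toSpec k) ≫ (σi ≫ m) ≫ φ ≫ ι := by rw [hσi]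
        _ = pullback.fst (𝒰.f i ≫ sU) (a1toSpec k) ≫ σi ≫ (m ≫ φ ≫ ι) := by
            simp only [Category.assoc]
        _ = pullback.fst (𝒰.f i ≫ sU) (a1toSpec k) ≫ σi ≫
              (pullback.fst (𝒰.f i ≫ sU) (a1toSpec k) ≫ g) := by rw [hg]
        _ = (pullback.fst (𝒰.f i ≫ sU) (a1toSpec k)) ≫
              (σi ≫ pullback.fst (𝒰.f i ≫ sU) (a1toSpec k)) ≫ g := by
            simp only [Category.assoc]
        _ = pullback.fst (𝒰.f i ≫ sU) (a1toSpec k) ≫ g := by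
            rw [hσi_fst, Category.id_comp]
        _ = m ≫ φ ≫ ι := hg.symm
    refine ⟨⟨σ ≫ φ, ?_⟩, ?_⟩
    · rw [Category.assoc, hφ, ← Category.assoc, hσfst, Category.id_comp]
    · apply Subtype.ext
      show pullback.fst sU (a1toSpec k) ≫ σ ≫ φ = φ
      exact main

end Paper
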